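/- (Dimension-counting core of Lemma 2.1) Let $V$ be an $(r+1)$-dimensional vector space, $W \subseteq V$ a subspace of dimension $r-1$, $K \subseteq V \otimes V$ a subspace containing $\bigwedge^2 V$ (characteristic zero). Write $H = V \otimes W$, $m = \dim(K / \bigwedge^2 V)$. If the image $\overline{K}$ of $K$ in $\mathrm{Sym}^2 V$ is not contained in the image $\overline{H}$ of $H$, then $\dim(K \cap H) \le \dim K - 2r$. -/

import Mathlib

open TensorProduct

/-- Rank–nullity for the restriction of a quotient map to a submodule. -/
lemma finrank_eq_map_mkQ_add_inf {k M : Type*} [Field k] [AddCommGroup M] [Module k M]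
    [FiniteDimensional k M] (A P : Submodule k M) :
    Module.finrank k P
      = Module.finrank k (P.map A.mkQ) + Module.finrank k (A ⊓ P : Submodule k M) := by
  have h := LinearMap.finrank_range_add_finrank_ker (A.mkQ.domRestrict P)
  rw [LinearMap.range_domRestrict, LinearMap.ker_domRestrict, Submodule.ker_mkQ] at h
  have hc : Submodule.comap P.subtype A = Submodule.comap P.subtype (A ⊓ P) := by
    ext x; simp [Submodule.mem_comap, x.2]
  rw [hc, (Submodule.comapSubtypeEquivOfLe (inf_le_right : A ⊓ P ≤ P)).finrank_eq] at h
  omega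

/-- Dimension-counting core of Lemma 2.1: if `K ⊇ ⋀² V` is a subspace of
`V ⊗ V` whose image in `Sym² V` is not contained in the image of `H = V ⊗ W`,
then `dim (K ∩ H) ≤ dim K - 2r`. -/
theorem dim_inter_le_of_image_not_le {k V : Type*} [Field k] [CharZero k]
    [AddCommGroup V] [Module k V] [FiniteDimensional k V]
    (r : ℕ) (hr : 1 ≤ r) (hV : Module.finrank k V = r + 1)
    (W : Submodule k V) (hW : Module.finrank k W = r - 1)
    (K : Submodule k (V ⊗[k] V))
    (A : Submodule k (V ⊗[k] V))
    (hA : A = LinearMap.ker ((TensorProduct.comm k V V).toLinearMap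
            + (LinearMap.id : V ⊗[k] V →ₗ[k] V ⊗[k] V)))
    (hAK : A ≤ K)
    (H : Submodule k (V ⊗[k] V))
    (hH : H = LinearMap.range
        (TensorProduct.map (LinearMap.id : V →ₗ[k] V) W.subtype))
    (hnot : ¬ Submodule.map A.mkQ K ≤ Submodule.map A.mkQ H) :
    (Module.finrank k (K ⊓ H : Submodule k (V ⊗[k] V)) : ℤ)
      ≤ (Module.finrank k K : ℤ) - 2 * r := by
  classical
  -- ### Construct a basis of `V` adapted to `W`
  obtain ⟨W', hc⟩ := Submodule.exists_isCompl W
  have hW' : Module.finrank k W' = 2 := by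
    have h := Submodule.finrank_add_eq_of_isCompl hc
    omega
  let bW : Module.Basis (Fin (r - 1)) k W := Module.finBasisOfFinrankEq k W hW
  let bW' : Module.Basis (Fin 2) k W' := Module.finBasisOfFinrankEq k W' hW'
  let e : (W × W') ≃ₗ[k] V := Submodule.prodEquivOfIsCompl W W' hc
  let b : Module.Basis (Fin (r - 1) ⊕ Fin 2) k V := (bW.prod bW').map e
  -- coordinates indexed by `Sum.inr _` vanish on `W`
  have key1 : ∀ w : V, w ∈ W → ∀ j, b.repr w (Sum.inr j) = 0 := by
    intro w hw j
    have h2 : (e.symm w).2 = 0 :=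
      (Submodule.prodEquivOfIsCompl_symm_apply_snd_eq_zero W W' hc).2 hw
    have hrepr : b.repr w (Sum.inr j) = bW'.repr (e.symm w).2 j := by
      simp [b, Module.Basis.map_repr]
    rw [hrepr, h2, map_zero]; rfl
  -- basis of `V ⊗ V`
  let B : Module.Basis ((Fin (r - 1) ⊕ Fin 2) × (Fin (r - 1) ⊕ Fin 2)) k (V ⊗[k] V) :=
    b.tensorProduct b
  -- ### The functional `Φ` picking out `2r - 1` coordinates
  let pr : (Fin (r - 1) ⊕ Fin (r - 1) ⊕ Unit) → (Fin (r - 1) ⊕ Fin 2) × (Fin (r - 1) ⊕ Fin 2) := fun p =>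
    match p with
    | Sum.inl i => (Sum.inl i, Sum.inr 0)
    | Sum.inr (Sum.inl i) => (Sum.inl i, Sum.inr 1)
    | Sum.inr (Sum.inr _) => (Sum.inr 0, Sum.inr 1)
  let Φ : (V ⊗[k] V) →ₗ[k] ((Fin (r - 1) ⊕ Fin (r - 1) ⊕ Unit) → k) := LinearMap.pi fun p => B.coord (pr p)
  -- `H ≤ ker Φ`
  have hHker : H ≤ LinearMap.ker Φ := by
    rw [hH]
    rintro x ⟨y, rfl⟩
    simp only [LinearMap.mem_ker]
    funext p
    simp only [Φ, LinearMap.pi_apply, Module.Basis.coord_apply, Pi.zero_apply]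
    induction y using TensorProduct.induction_on with
    | zero => simp
    | tmul v w =>
        have h2 : ∃ j, (pr p).2 = Sum.inr j := by
          rcases p with i | i | u <;> exact ⟨_, rfl⟩
        obtain ⟨j, hj⟩ := h2
        have hr2 := Module.Basis.tensorProduct_repr_tmul_apply b b v (W.subtype w) (pr p).1 (pr p).2
        have hz := key1 (W.subtype w) w.2 j
        simp only [TensorProduct.map_tmul, LinearMap.id_coe, id_eq, B]
        rw [show pr p = ((pr p).1, (pr p).2) from rfl, hr2, hj, hz, zero_smul]
    | add y₁ y₂ h₁ h₂ => simp only [map_add, Finsupp.add_apply, h₁, h₂, add_zero]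
  -- the skew elements
  let xel : (Fin (r - 1) ⊕ Fin (r - 1) ⊕ Unit) → (V ⊗[k] V) := fun p => B (pr p) - B (Prod.swap (pr p))
  have hxelA : ∀ p, xel p ∈ A := by
    intro p
    rw [hA, LinearMap.mem_ker]
    simp only [xel, B, Module.Basis.tensorProduct_apply', LinearMap.add_apply, map_sub,
      LinearEquiv.coe_coe, TensorProduct.comm_tmul, LinearMap.id_apply, Prod.fst_swap,
      Prod.snd_swap]
    abel
  have hi : ∀ p p' : Fin (r - 1) ⊕ Fin (r - 1) ⊕ Unit, pr p = pr p' ↔ p = p' := by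
    rintro (i | i | u) (i' | i' | u') <;>
      simp [pr, Prod.ext_iff, Fin.ext_iff]
  have key : ∀ p p' : Fin (r - 1) ⊕ Fin (r - 1) ⊕ Unit, Φ (xel p) p' = if p' = p then 1 else 0 := by
    intro p p'
    have hs : Prod.swap (pr p) ≠ pr p' := by
      rcases p with i | i | u <;> rcases p' with i' | i' | u' <;>
        simp [pr, Prod.ext_iff, Fin.ext_iff]
    simp only [Φ, LinearMap.pi_apply, Module.Basis.coord_apply, xel, map_sub, Finsupp.sub_apply,
      Module.Basis.repr_self_apply]
    rw [if_neg hs, sub_zero]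
    by_cases h : p' = p
    · subst h; rw [if_pos rfl, if_pos rfl]
    · rw [if_neg (fun hq => h (((hi _ _).1 hq).symm)), if_neg h]
  have hΦxel : ∀ p, Φ (xel p) = Pi.single p 1 := by
    intro p
    funext p'
    rw [key p p', Pi.single_apply]
  -- `Φ` restricted to `A` is surjective
  let ΦA : A →ₗ[k] ((Fin (r - 1) ⊕ Fin (r - 1) ⊕ Unit) → k) := Φ.domRestrict A
  have hrange : LinearMap.range ΦA = ⊤ := by
    rw [← top_le_iff, ← (Pi.basisFun k (Fin (r - 1) ⊕ Fin (r - 1) ⊕ Unit)).span_eq, Submodule.span_le]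
    rintro _ ⟨p, rfl⟩
    refine ⟨⟨xel p, hxelA p⟩, ?_⟩
    simp only [ΦA, LinearMap.domRestrict_apply, hΦxel p, Pi.basisFun_apply]
  -- dimension bookkeeping for `Φ`
  have hcardκ : Fintype.card (Fin (r - 1) ⊕ Fin (r - 1) ⊕ Unit) = (r - 1) + ((r - 1) + 1) := by
    simp
  have eΦ : Module.finrank k A
      = Fintype.card (Fin (r - 1) ⊕ Fin (r - 1) ⊕ Unit) + Module.finrank k (LinearMap.ker ΦA) := by
    have h := LinearMap.finrank_range_add_finrank_ker ΦA
    rw [hrange, finrank_top, Module.finrank_fintype_fun_eq_card] at h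
    omega
  have hAH_le : Module.finrank k (A ⊓ H : Submodule k (V ⊗[k] V))
      ≤ Module.finrank k (LinearMap.ker ΦA) := by
    have hle : Submodule.comap A.subtype (A ⊓ H) ≤ LinearMap.ker ΦA := by
      intro x hx
      simp only [Submodule.mem_comap, Submodule.mem_inf] at hx
      simpa [ΦA, LinearMap.mem_ker, LinearMap.domRestrict_apply] using hHker hx.2
    calc Module.finrank k (A ⊓ H : Submodule k (V ⊗[k] V))
        = Module.finrank k (Submodule.comap A.subtype (A ⊓ H)) :=
          ((Submodule.comapSubtypeEquivOfLe (inf_le_left : A ⊓ H ≤ A)).finrank_eq).symm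
      _ ≤ Module.finrank k (LinearMap.ker ΦA) := Submodule.finrank_mono hle
  -- ### Quotient bookkeeping
  have e1 := finrank_eq_map_mkQ_add_inf A K
  have e2 := finrank_eq_map_mkQ_add_inf A (K ⊓ H)
  have hAKH : A ⊓ (K ⊓ H) = A ⊓ H := by
    rw [← inf_assoc, inf_eq_left.mpr hAK]
  rw [hAKH] at e2
  have hAKinf : A ⊓ K = A := inf_eq_left.mpr hAK
  rw [hAKinf] at e1
  -- strict inequality in the quotient
  have e3 : Module.finrank k ((K ⊓ H).map A.mkQ) < Module.finrank k (K.map A.mkQ) := by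
    refine Submodule.finrank_lt_finrank_of_lt (lt_of_le_of_lt (b := Submodule.map A.mkQ K ⊓ Submodule.map A.mkQ H) ?_ ?_)
    · exact le_inf (Submodule.map_mono inf_le_left) (Submodule.map_mono inf_le_right)
    · exact lt_of_le_of_ne inf_le_left (fun h => hnot (inf_eq_left.mp h))
  omega
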